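/- arXiv:1304.3865 — 3 statements merged into one kernel-verified Lean document; each statement's English description precedes it below -/
import Mathlib

section
/- Let X₁, ..., X_N be i.i.d. random variables with a class-C CDF F having tail exponent n > 0, and let X_(1) = max₁≤i≤N Xᵢ. Then log(X_(1)) / log(log N) converges in probability to 1/n as N → ∞. -/
open MeasureTheory ProbabilityTheory Filter

section aux

lemma lin_exp_zero (a k : ℝ) :
    Tendsto (fun u : ℝ => (a + k * u) * Real.exp (-u)) atTop (nhds 0) := by
  have h1 : Tendsto (fun u : ℝ => a * Real.exp (-u)) atTop (nhds 0) := by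
    simpa using (Real.tendsto_exp_neg_atTop_nhds_zero).const_mul a
  have h2 : Tendsto (fun u : ℝ => k * (u ^ 1 * Real.exp (-u))) atTop (nhds 0) := by
    simpa using (Real.tendsto_pow_mul_exp_neg_atTop_nhds_zero 1).const_mul k
  have := h1.add h2
  simp only [add_zero] at this
  refine this.congr fun u => by ring

lemma exp_rpow' (a n : ℝ) : (Real.exp a) ^ n = Real.exp (n * a) := by
  rw [Real.rpow_def_of_pos (Real.exp_pos a), Real.log_exp]; ring_nf

lemma auxf_neg (H : ℝ → ℝ) (α β n l c : ℝ) (hβ : 0 < β) (hn : 0 < n) (hc : 1 < n * c)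
    (hH : Tendsto (fun x : ℝ => H x / x ^ n) atTop (nhds 0)) :
    Tendsto (fun t : ℝ => Real.exp t + Real.log α + l * (c * t) + H (Real.exp (c * t))
      - β * Real.exp (n * (c * t))) atTop atBot := by
  have hc0 : 0 < c := by nlinarith
  have hct : Tendsto (fun t : ℝ => c * t) atTop atTop := tendsto_id.const_mul_atTop hc0
  have hnct : Tendsto (fun t : ℝ => n * (c * t)) atTop atTop := hct.const_mul_atTop hn
  have hE : Tendsto (fun t : ℝ => Real.exp (n * (c * t))) atTop atTop :=
    Real.tendsto_exp_atTop.comp hnct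
  have hb1 : Tendsto (fun t : ℝ => Real.exp t / Real.exp (n * (c * t))) atTop (nhds 0) := by
    have h0 : Tendsto (fun t : ℝ => (n * c - 1) * t) atTop atTop :=
      tendsto_id.const_mul_atTop (by linarith)
    have : Tendsto (fun t : ℝ => t - n * (c * t)) atTop atBot := by
      have := (tendsto_neg_atTop_atBot).comp h0
      refine this.congr fun t => by simp; ring
    have := Real.tendsto_exp_atBot.comp this
    refine this.congr fun t => by simp [Real.exp_sub]
  have hb2 : Tendsto (fun t : ℝ => (Real.log α + l * (c * t)) / Real.exp (n * (c * t)))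
      atTop (nhds 0) := by
    have := (lin_exp_zero (Real.log α) (l / n)).comp hnct
    refine this.congr fun t => ?_
    simp only [Function.comp]
    rw [Real.exp_neg, div_eq_mul_inv]
    congr 2
    field_simp
  have hb3 : Tendsto (fun t : ℝ => H (Real.exp (c * t)) / Real.exp (n * (c * t)))
      atTop (nhds 0) := by
    have := hH.comp (Real.tendsto_exp_atTop.comp hct)
    refine this.congr fun t => ?_
    simp only [Function.comp]
    rw [exp_rpow']
  have hbr : Tendsto (fun t : ℝ => Real.exp t / Real.exp (n * (c * t))
      + (Real.log α + l * (c * t)) / Real.exp (n * (c * t))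
      + H (Real.exp (c * t)) / Real.exp (n * (c * t)) - β) atTop (nhds (-β)) := by
    have := ((hb1.add hb2).add hb3).sub_const β
    simpa using this
  have := hE.atTop_mul_neg (by linarith) hbr
  refine this.congr fun t => ?_
  have hEne : Real.exp (n * (c * t)) ≠ 0 := (Real.exp_pos _).ne'
  field_simp
  ring

lemma auxf_pos (H : ℝ → ℝ) (α β n l c : ℝ) (hc : 0 < c) (hnc : n * c < 1)
    (hH : Tendsto (fun x : ℝ => H x / x ^ n) atTop (nhds 0)) :
    Tendsto (fun t : ℝ => Real.exp t + Real.log α + l * (c * t) + H (Real.exp (c * t))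
      - β * Real.exp (n * (c * t))) atTop atTop := by
  have hct : Tendsto (fun t : ℝ => c * t) atTop atTop := tendsto_id.const_mul_atTop hc
  have hnct1 : Tendsto (fun t : ℝ => Real.exp (n * (c * t) - t)) atTop (nhds 0) := by
    have h0 : Tendsto (fun t : ℝ => (1 - n * c) * t) atTop atTop :=
      tendsto_id.const_mul_atTop (by linarith)
    have := Real.tendsto_exp_atBot.comp ((tendsto_neg_atTop_atBot).comp h0)
    refine this.congr fun t => by simp; ring_nf
  have hb2 : Tendsto (fun t : ℝ => (Real.log α + l * (c * t)) / Real.exp t)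
      atTop (nhds 0) := by
    have := lin_exp_zero (Real.log α) (l * c)
    refine this.congr fun t => ?_
    rw [Real.exp_neg, div_eq_mul_inv]
    ring_nf
  have hb3 : Tendsto (fun t : ℝ => H (Real.exp (c * t)) / Real.exp t) atTop (nhds 0) := by
    have h1 : Tendsto (fun t : ℝ => H (Real.exp (c * t)) / Real.exp (n * (c * t)))
        atTop (nhds 0) := by
      have := hH.comp (Real.tendsto_exp_atTop.comp hct)
      refine this.congr fun t => ?_
      simp only [Function.comp]
      rw [exp_rpow']
    have := h1.mul hnct1
    simp only [mul_zero] at this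
    refine this.congr fun t => ?_
    rw [div_mul_eq_mul_div, Real.exp_sub]
    field_simp
  have hb4 : Tendsto (fun t : ℝ => β * Real.exp (n * (c * t) - t)) atTop (nhds 0) := by
    simpa using hnct1.const_mul β
  have hbr : Tendsto (fun t : ℝ => 1 + (Real.log α + l * (c * t)) / Real.exp t
      + H (Real.exp (c * t)) / Real.exp t - β * Real.exp (n * (c * t) - t))
      atTop (nhds 1) := by
    have := ((hb2.add hb3).const_add 1).sub hb4
    simp only [add_zero, sub_zero] at this
    refine this.congr fun t => by ring
  have := Real.tendsto_exp_atTop.atTop_mul_pos (by norm_num : (0:ℝ) < 1) hbr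
  refine this.congr fun t => ?_
  have : Real.exp t ≠ 0 := (Real.exp_pos _).ne'
  rw [Real.exp_sub]
  field_simp
  ring

-- eventual identity: N * (1 - F x_N) = ratio * exp (f (log log N))
lemma key_ident (F H : ℝ → ℝ) (α β n l c : ℝ) (hα : 0 < α) :
    (fun N : ℕ => (N : ℝ) * (1 - F (Real.exp (c * Real.log (Real.log N)))))
      =ᶠ[atTop]
    (fun N : ℕ =>
      ((1 - F (Real.exp (c * Real.log (Real.log N)))) /
        (α * (Real.exp (c * Real.log (Real.log N))) ^ l *
          Real.exp (-β * (Real.exp (c * Real.log (Real.log N))) ^ n +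
            H (Real.exp (c * Real.log (Real.log N)))))) *
      Real.exp (Real.exp (Real.log (Real.log N)) + Real.log α
        + l * (c * Real.log (Real.log N))
        + H (Real.exp (c * Real.log (Real.log N)))
        - β * Real.exp (n * (c * Real.log (Real.log N))))) := by
  have hev : ∀ᶠ N : ℕ in atTop, 1 < Real.log N :=
    (Real.tendsto_log_atTop.comp tendsto_natCast_atTop_atTop).eventually_gt_atTop 1
  filter_upwards [hev] with N hN
  have hNne : N ≠ 0 := by
    rintro rfl
    simp [Real.log_zero] at hN
    linarith
  have hNpos : (0 : ℝ) < N := by exact_mod_cast Nat.pos_of_ne_zero hNne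
  have hlogN : (0 : ℝ) < Real.log N := by linarith
  set t : ℝ := Real.log (Real.log N) with ht
  set x : ℝ := Real.exp (c * t) with hx
  have hxl : x ^ l = Real.exp (l * (c * t)) := exp_rpow' _ _
  have hxn : x ^ n = Real.exp (n * (c * t)) := exp_rpow' _ _
  have hexp1 : Real.exp (Real.exp t) = (N : ℝ) := by
    rw [ht, Real.exp_log hlogN, Real.exp_log hNpos]
  have hexpand : Real.exp (Real.exp t + Real.log α + l * (c * t) + H x
      - β * Real.exp (n * (c * t)))
      = (N : ℝ) * (α * x ^ l * Real.exp (-β * x ^ n + H x)) := by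
    rw [show Real.exp t + Real.log α + l * (c * t) + H x - β * Real.exp (n * (c * t))
        = Real.exp t + (Real.log α + (l * (c * t) + (-β * Real.exp (n * (c * t)) + H x)))
        by ring]
    rw [Real.exp_add, Real.exp_add, Real.exp_add, hexp1, Real.exp_log hα, hxl, hxn]
    ring
  have hgpos : 0 < α * x ^ l * Real.exp (-β * x ^ n + H x) := by
    have : (0:ℝ) < x ^ l := by rw [hxl]; exact Real.exp_pos _
    positivity
  rw [hexpand]
  have hxl0 : x ^ l ≠ 0 := by rw [hxl]; exact (Real.exp_pos _).ne'
  field_simp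

lemma tendA (F H : ℝ → ℝ) (α β n l c : ℝ) (hα : 0 < α) (hβ : 0 < β) (hn : 0 < n)
    (hc : 1 < n * c)
    (hH : Tendsto (fun x : ℝ => H x / x ^ n) atTop (nhds 0))
    (htail : Tendsto
      (fun x : ℝ => (1 - F x) / (α * x ^ l * Real.exp (-β * x ^ n + H x)))
      atTop (nhds 1)) :
    Tendsto (fun N : ℕ => (N : ℝ) * (1 - F (Real.exp (c * Real.log (Real.log N)))))
      atTop (nhds 0) := by
  have hc0 : 0 < c := by nlinarith
  have hL : Tendsto (fun N : ℕ => Real.log (Real.log N)) atTop atTop :=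
    Real.tendsto_log_atTop.comp (Real.tendsto_log_atTop.comp tendsto_natCast_atTop_atTop)
  have hxN : Tendsto (fun N : ℕ => Real.exp (c * Real.log (Real.log N))) atTop atTop :=
    Real.tendsto_exp_atTop.comp (hL.const_mul_atTop hc0)
  have h1 := htail.comp hxN
  have h2 := (Real.tendsto_exp_atBot.comp ((auxf_neg H α β n l c hβ hn hc hH).comp hL))
  have := h1.mul h2
  simp only [mul_zero] at this
  exact this.congr' (key_ident F H α β n l c hα).symm

lemma tendB (F H : ℝ → ℝ) (α β n l c : ℝ) (hα : 0 < α) (hβ : 0 < β) (hn : 0 < n)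
    (hc0 : 0 < c) (hc : n * c < 1)
    (hH : Tendsto (fun x : ℝ => H x / x ^ n) atTop (nhds 0))
    (htail : Tendsto
      (fun x : ℝ => (1 - F x) / (α * x ^ l * Real.exp (-β * x ^ n + H x)))
      atTop (nhds 1)) :
    Tendsto (fun N : ℕ => (N : ℝ) * (1 - F (Real.exp (c * Real.log (Real.log N)))))
      atTop atTop := by
  have hL : Tendsto (fun N : ℕ => Real.log (Real.log N)) atTop atTop :=
    Real.tendsto_log_atTop.comp (Real.tendsto_log_atTop.comp tendsto_natCast_atTop_atTop)
  have hxN : Tendsto (fun N : ℕ => Real.exp (c * Real.log (Real.log N))) atTop atTop :=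
    Real.tendsto_exp_atTop.comp (hL.const_mul_atTop hc0)
  have h1 := htail.comp hxN
  have h2 := (Real.tendsto_exp_atTop.comp ((auxf_pos H α β n l c hc0 hc hH).comp hL))
  have := h1.pos_mul_atTop (by norm_num : (0:ℝ) < 1) h2
  exact this.congr' (key_ident F H α β n l c hα).symm

end aux
lemma key_prob (Ω : Type*) [MeasureSpace Ω] [IsProbabilityMeasure (ℙ : Measure Ω)]
    (X : ℕ → Ω → ℝ) (F H : ℝ → ℝ) (α β n l : ℝ)
    (hα : 0 < α) (hβ : 0 < β) (hn : 0 < n)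
    (hmeas : ∀ i, Measurable (X i))
    (hindep : iIndepFun X ℙ)
    (hcdf : ∀ i x, (ℙ : Measure Ω) {ω | X i ω ≤ x} = ENNReal.ofReal (F x))
    (hH : Tendsto (fun x : ℝ => H x / x ^ n) atTop (nhds 0))
    (htail : Tendsto
      (fun x : ℝ => (1 - F x) / (α * x ^ l * Real.exp (-β * x ^ n + H x)))
      atTop (nhds 1))
    (ε : ℝ) (hε : 0 < ε) (hεn : ε < 1 / n) :
    Tendsto (fun N : ℕ =>
        ((ℙ : Measure Ω) {ω |
          ε < |Real.log (⨆ i : Fin N, X i ω) / Real.log (Real.log N) - 1 / n|}).toReal)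
      atTop (nhds 0) := by
  have hF1 : ∀ x : ℝ, F x ≤ 1 := by
    intro x
    have h := hcdf 0 x
    have h2 : (ℙ : Measure Ω) {ω | X 0 ω ≤ x} ≤ 1 := prob_le_one
    rw [h] at h2
    exact ENNReal.ofReal_le_one.mp h2
  set c₁ : ℝ := 1 / n + ε with hc₁def
  set c₂ : ℝ := 1 / n - ε with hc₂def
  have hn1 : n * (1 / n) = 1 := by field_simp
  have hc₁ : 1 < n * c₁ := by rw [hc₁def, mul_add, hn1]; nlinarith
  have hc₂0 : 0 < c₂ := by rw [hc₂def]; linarith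
  have hc₂ : n * c₂ < 1 := by rw [hc₂def, mul_sub, hn1]; nlinarith
  -- the CDF of the max
  have hB_eq : ∀ (x : ℝ) (N : ℕ),
      (ℙ : Measure Ω) {ω | ∀ i : Fin N, X i ω ≤ x} = ENNReal.ofReal (F x) ^ N := by
    intro x N
    have hset : {ω | ∀ i : Fin N, X i ω ≤ x}
        = ⋂ i ∈ Finset.range N, X i ⁻¹' Set.Iic x := by
      ext ω
      simp [Set.mem_iInter, Fin.forall_iff, Finset.mem_range, Set.Iic]
    rw [hset, hindep.measure_inter_preimage_eq_mul (Finset.range N)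
      (sets := fun _ => Set.Iic x) (fun i _ => measurableSet_Iic)]
    have : ∀ i : ℕ, (ℙ : Measure Ω) (X i ⁻¹' Set.Iic x) = ENNReal.ofReal (F x) := by
      intro i
      have : X i ⁻¹' Set.Iic x = {ω | X i ω ≤ x} := rfl
      rw [this, hcdf]
    simp [this, Finset.prod_const]
  -- the tail probability
  have hU_le : ∀ (x : ℝ) (N : ℕ),
      ((ℙ : Measure Ω) (⋃ i : Fin N, {ω | x < X i ω})).toReal ≤ (N : ℝ) * (1 - F x) := by
    intro x N
    have hone : ∀ i : ℕ, (ℙ : Measure Ω) {ω | x < X i ω} ≤ ENNReal.ofReal (1 - F x) := by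
      intro i
      have hc : {ω | x < X i ω} = {ω | X i ω ≤ x}ᶜ := by
        ext ω; simp [not_le]
      have hms : MeasurableSet {ω | X i ω ≤ x} := (hmeas i) measurableSet_Iic
      rw [hc, prob_compl_eq_one_sub hms, hcdf]
      rw [ENNReal.le_ofReal_iff_toReal_le (by finiteness) (by linarith [hF1 x])]
      rw [ENNReal.toReal_sub_of_le (by simpa using hF1 x) (by norm_num)]
      simp only [ENNReal.toReal_one, ENNReal.toReal_ofReal']
      rcases le_total (F x) 0 with h | h
      · rw [sup_eq_right.mpr h]; linarith
      · rw [sup_eq_left.mpr h]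
    have h1 : (ℙ : Measure Ω) (⋃ i : Fin N, {ω | x < X i ω})
        ≤ ENNReal.ofReal ((N : ℝ) * (1 - F x)) := by
      calc (ℙ : Measure Ω) (⋃ i : Fin N, {ω | x < X i ω})
          ≤ ∑' i : Fin N, (ℙ : Measure Ω) {ω | x < X (i : ℕ) ω} := measure_iUnion_le _
        _ ≤ ∑' _i : Fin N, ENNReal.ofReal (1 - F x) := by
            exact ENNReal.tsum_le_tsum fun i => hone i
        _ = (N : ENNReal) * ENNReal.ofReal (1 - F x) := by
            rw [tsum_fintype]; simp [Finset.sum_const, mul_comm]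
        _ = ENNReal.ofReal ((N : ℝ) * (1 - F x)) := by
            rw [ENNReal.ofReal_mul (by positivity)]
            simp
    calc ((ℙ : Measure Ω) (⋃ i : Fin N, {ω | x < X i ω})).toReal
        ≤ (ENNReal.ofReal ((N : ℝ) * (1 - F x))).toReal :=
          ENNReal.toReal_mono ENNReal.ofReal_ne_top h1
      _ = (N : ℝ) * (1 - F x) := by
          rw [ENNReal.toReal_ofReal
            (mul_nonneg (Nat.cast_nonneg N) (by linarith [hF1 x]))]
  -- limits
  have hA : Tendsto (fun N : ℕ => (N : ℝ) * (1 - F (Real.exp (c₁ * Real.log (Real.log N)))))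
      atTop (nhds 0) := tendA F H α β n l c₁ hα hβ hn hc₁ hH htail
  have hBtop : Tendsto (fun N : ℕ => (N : ℝ) * (1 - F (Real.exp (c₂ * Real.log (Real.log N)))))
      atTop atTop := tendB F H α β n l c₂ hα hβ hn hc₂0 hc₂ hH htail
  have hB : Tendsto (fun N : ℕ =>
      Real.exp (-((N : ℝ) * (1 - F (Real.exp (c₂ * Real.log (Real.log N)))))))
      atTop (nhds 0) :=
    Real.tendsto_exp_atBot.comp (tendsto_neg_atTop_atBot.comp hBtop)
  have hLpos : ∀ᶠ N : ℕ in atTop, 0 < Real.log (Real.log N) :=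
    (Real.tendsto_log_atTop.comp
      (Real.tendsto_log_atTop.comp tendsto_natCast_atTop_atTop)).eventually_gt_atTop 0
  -- the eventual bound
  have hbound : ∀ᶠ N : ℕ in atTop,
      ((ℙ : Measure Ω) {ω |
        ε < |Real.log (⨆ i : Fin N, X i ω) / Real.log (Real.log N) - 1 / n|}).toReal
      ≤ (N : ℝ) * (1 - F (Real.exp (c₁ * Real.log (Real.log N))))
        + Real.exp (-((N : ℝ) * (1 - F (Real.exp (c₂ * Real.log (Real.log N)))))) := by
    filter_upwards [hLpos] with N hL
    set L : ℝ := Real.log (Real.log N) with hLdef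
    set xh : ℝ := Real.exp (c₁ * L) with hxhdef
    set xl : ℝ := Real.exp (c₂ * L) with hxldef
    set U : Set Ω := ⋃ i : Fin N, {ω | xh < X i ω} with hUdef
    set B : Set Ω := {ω | ∀ i : Fin N, X i ω ≤ xl} with hBdef
    have hsub : {ω | ε < |Real.log (⨆ i : Fin N, X i ω) / L - 1 / n|} ⊆ U ∪ B := by
      intro ω hω
      by_contra hcon
      simp only [Set.mem_union, not_or] at hcon
      obtain ⟨hU1, hB1⟩ := hcon
      have h1 : ∀ i : Fin N, X i ω ≤ xh := by
        intro i
        by_contra h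
        exact hU1 (Set.mem_iUnion.mpr ⟨i, by simpa using lt_of_not_ge h⟩)
      have h2 : ∃ i : Fin N, xl < X i ω := by
        by_contra h
        push_neg at h
        exact hB1 (fun i => h i)
      obtain ⟨i, hi⟩ := h2
      set M : ℝ := ⨆ i : Fin N, X i ω with hMdef
      have hMle : M ≤ xh := Real.iSup_le (fun j => h1 j) (Real.exp_pos _).le
      have hMlt : xl < M :=
        lt_of_lt_of_le hi (le_ciSup (f := fun j : Fin N => X (j : ℕ) ω)
          (Set.Finite.bddAbove (Set.finite_range _)) i)
      have hM0 : 0 < M := lt_trans (Real.exp_pos _) hMlt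
      have hup : Real.log M ≤ c₁ * L := by
        calc Real.log M ≤ Real.log xh := Real.log_le_log hM0 hMle
          _ = c₁ * L := Real.log_exp _
      have hlo : c₂ * L < Real.log M := by
        calc c₂ * L = Real.log xl := (Real.log_exp _).symm
          _ < Real.log M := Real.log_lt_log (Real.exp_pos _) hMlt
      have habs : |Real.log M / L - 1 / n| ≤ ε := by
        rw [abs_le]
        constructor
        · have : c₂ ≤ Real.log M / L := by
            rw [le_div_iff₀ hL]; linarith
          rw [hc₂def] at this; linarith
        · have : Real.log M / L ≤ c₁ := by
            rw [div_le_iff₀ hL]; linarith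
          rw [hc₁def] at this; linarith
      rw [Set.mem_setOf_eq] at hω
      linarith
    have hUm : ((ℙ : Measure Ω) U).toReal ≤ (N : ℝ) * (1 - F xh) := hU_le xh N
    have hBm : ((ℙ : Measure Ω) B).toReal ≤ Real.exp (-((N : ℝ) * (1 - F xl))) := by
      rw [hB_eq xl N, ENNReal.toReal_pow, ENNReal.toReal_ofReal']
      have hbase : max (F xl) 0 ≤ Real.exp (-(1 - F xl)) := by
        apply max_le
        · have := Real.add_one_le_exp (-(1 - F xl))
          linarith
        · exact (Real.exp_pos _).le
      calc (max (F xl) 0) ^ N ≤ (Real.exp (-(1 - F xl))) ^ N :=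
            pow_le_pow_left₀ (le_max_right _ _) hbase N
        _ = Real.exp (-((N : ℝ) * (1 - F xl))) := by
            rw [← Real.exp_nat_mul]; ring_nf
    calc ((ℙ : Measure Ω) {ω | ε < |Real.log (⨆ i : Fin N, X i ω) / L - 1 / n|}).toReal
        ≤ ((ℙ : Measure Ω) (U ∪ B)).toReal :=
          ENNReal.toReal_mono (by finiteness) (measure_mono hsub)
      _ ≤ ((ℙ : Measure Ω) U + (ℙ : Measure Ω) B).toReal :=
          ENNReal.toReal_mono (by finiteness) (measure_union_le U B)
      _ = ((ℙ : Measure Ω) U).toReal + ((ℙ : Measure Ω) B).toReal :=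
          ENNReal.toReal_add (by finiteness) (by finiteness)
      _ ≤ (N : ℝ) * (1 - F xh) + Real.exp (-((N : ℝ) * (1 - F xl))) :=
          add_le_add hUm hBm
  refine tendsto_of_tendsto_of_tendsto_of_le_of_le'
    (tendsto_const_nhds) (by simpa using hA.add hB) ?_ hbound
  exact Eventually.of_forall fun N => ENNReal.toReal_nonneg

/-- Let `X 0, X 1, …` be i.i.d. with class-C CDF `F` having tail exponent `n > 0`, and
let `M N = max_{i < N} X i`. Then `log (M N) / log (log N)` converges in probability
to `1/n`. -/
theorem stmt_8 (Ω : Type*) [MeasureSpace Ω] [IsProbabilityMeasure (ℙ : Measure Ω)]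
    (X : ℕ → Ω → ℝ) (F H : ℝ → ℝ) (α β n l : ℝ)
    (hα : 0 < α) (hβ : 0 < β) (hn : 0 < n)
    (hmeas : ∀ i, Measurable (X i))
    (hindep : iIndepFun X ℙ)
    (hcdf : ∀ i x, (ℙ : Measure Ω) {ω | X i ω ≤ x} = ENNReal.ofReal (F x))
    (hcont : Continuous F) (hsupp : ∀ x ≤ (0 : ℝ), F x = 0)
    (hmono : StrictMonoOn F (Set.Ioi 0))
    (hH : Tendsto (fun x : ℝ => H x / x ^ n) atTop (nhds 0))
    (htail : Tendsto
      (fun x : ℝ => (1 - F x) / (α * x ^ l * Real.exp (-β * x ^ n + H x)))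
      atTop (nhds 1)) :
    ∀ ε : ℝ, 0 < ε →
      Tendsto (fun N : ℕ =>
          ((ℙ : Measure Ω) {ω |
            ε < |Real.log (⨆ i : Fin N, X i ω) / Real.log (Real.log N) - 1 / n|}).toReal)
        atTop (nhds 0) := by
  intro ε hε
  set ε' : ℝ := min ε (1 / (2 * n)) with hε'def
  have hε'0 : 0 < ε' := lt_min hε (by positivity)
  have hε'n : ε' < 1 / n := by
    refine lt_of_le_of_lt (min_le_right _ _) ?_
    rw [div_lt_div_iff₀ (by positivity) (by positivity)]
    nlinarith
  have hkey := key_prob Ω X F H α β n l hα hβ hn hmeas hindep hcdf hH htail ε' hε'0 hε'n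
  refine tendsto_of_tendsto_of_tendsto_of_le_of_le'
    (tendsto_const_nhds) hkey
    (Eventually.of_forall fun N => ENNReal.toReal_nonneg) ?_
  refine Eventually.of_forall fun N => ?_
  refine ENNReal.toReal_mono (by finiteness) (measure_mono ?_)
  intro ω hω
  rw [Set.mem_setOf_eq] at hω ⊢
  exact lt_of_le_of_lt (min_le_left _ _) hω
end

section
/- Suppose F_h is a class-C distribution with tail 1 - F_h(x) ~ α x^l e^{-βx^n + H(x)}, H(x) = o(x^n), and g is a positive random variable independent of h with E[e^{s g^n}] < ∞ in a neighborhood of 0. Fix λ > 0, μ ≥ 0, and let X = h/(λ + μg). Then log(F_X⁻¹(1 - 1/N)) / log log N → 1/n as N → ∞, i.e., the composite channel variable X has the same tail exponent n as h. -/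
open MeasureTheory ProbabilityTheory Filter
open scoped ENNReal

/-- Let `h` have a class-C CDF `F_h` with tail exponent `n > 0`, and let `g` be a positive
random variable independent of `h` with `E[exp(s g^n)] < ∞` for some `s > 0`. Fix `λ > 0`,
`μ ≥ 0`, and let `X = h/(λ + μ g)` with CDF `F_X`. Then the quantile `x N = F_X⁻¹(1 - 1/N)`
satisfies `log (x N) / log (log N) → 1/n`, i.e. `X` has the same tail exponent as `h`. -/
theorem stmt_13 (Ω : Type*) [MeasureSpace Ω] [IsProbabilityMeasure (ℙ : Measure Ω)]
    (h g : Ω → ℝ) (Fh FX H : ℝ → ℝ) (α β n l lam mu : ℝ)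
    (hα : 0 < α) (hβ : 0 < β) (hn : 0 < n) (hlam : 0 < lam) (hmu : 0 ≤ mu)
    (hmeas_h : Measurable h) (hmeas_g : Measurable g)
    (hpos_h : ∀ᵐ ω ∂(ℙ : Measure Ω), 0 < h ω)
    (hpos_g : ∀ᵐ ω ∂(ℙ : Measure Ω), 0 < g ω)
    (hindep : IndepFun h g ℙ)
    (hFh : ∀ x, (ℙ : Measure Ω) {ω | h ω ≤ x} = ENNReal.ofReal (Fh x))
    (hH : Tendsto (fun x : ℝ => H x / x ^ n) atTop (nhds 0))
    (htail : Tendsto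
      (fun x : ℝ => (1 - Fh x) / (α * x ^ l * Real.exp (-β * x ^ n + H x)))
      atTop (nhds 1))
    (hmoment : ∃ s : ℝ, 0 < s ∧ Integrable (fun ω => Real.exp (s * g ω ^ n)) ℙ)
    (hFX : ∀ x, FX x = ((ℙ : Measure Ω) {ω | h ω / (lam + mu * g ω) ≤ x}).toReal)
    (x : ℕ → ℝ) (hxpos : ∀ N, 0 < x N)
    (hquant : ∀ N : ℕ, 1 ≤ N → 1 - FX (x N) = 1 / N) :
    Tendsto (fun N : ℕ => Real.log (x N) / Real.log (Real.log N)) atTop (nhds (1 / n)) := by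
  classical
  -- the tail function of `h`
  set t : ℝ → ℝ := fun y => ((ℙ : Measure Ω) {ω | y < h ω}).toReal with htdef
  have hmsh : ∀ y : ℝ, MeasurableSet {ω | y < h ω} := fun y =>
    measurableSet_lt measurable_const hmeas_h
  have hmshle : ∀ y : ℝ, MeasurableSet {ω | h ω ≤ y} := fun y =>
    measurableSet_le hmeas_h measurable_const
  have htcompl : ∀ y : ℝ,
      ((ℙ : Measure Ω) {ω | h ω ≤ y}).toReal + t y = 1 := by
    intro y
    have hset : {ω : Ω | y < h ω} = {ω : Ω | h ω ≤ y}ᶜ := by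
      ext ω; simp [not_le]
    have := measure_add_measure_compl (μ := (ℙ : Measure Ω)) (hmshle y)
    rw [measure_univ] at this
    have h2 : (((ℙ : Measure Ω) {ω | h ω ≤ y}) + ((ℙ : Measure Ω) {ω | y < h ω})).toReal
        = (1 : ℝ≥0∞).toReal := by rw [hset]; rw [this]
    rw [ENNReal.toReal_add (measure_ne_top _ _) (measure_ne_top _ _)] at h2
    simpa using h2
  -- antitonicity of t
  have hanti : ∀ y z : ℝ, y ≤ z → t z ≤ t y := by
    intro y z hyz
    exact ENNReal.toReal_mono (measure_ne_top _ _)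
      (measure_mono (fun ω hω => lt_of_le_of_lt hyz hω))
  -- eventually Fh y = P(h ≤ y).toReal and positivity of the tail
  have hcdf_pos : ∃ k : ℕ, (ℙ : Measure Ω) {ω | h ω ≤ (k : ℝ)} ≠ 0 := by
    by_contra hcon
    push_neg at hcon
    have hun : (⋃ k : ℕ, {ω : Ω | h ω ≤ (k : ℝ)}) = Set.univ := by
      ext ω; simp only [Set.mem_iUnion, Set.mem_univ, iff_true, Set.mem_setOf_eq]
      exact exists_nat_ge (h ω)
    have := measure_iUnion_null (μ := (ℙ : Measure Ω))
      (s := fun k : ℕ => {ω : Ω | h ω ≤ (k : ℝ)}) (fun k => hcon k)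
    rw [hun, measure_univ] at this
    exact one_ne_zero this
  obtain ⟨k₀, hk₀⟩ := hcdf_pos
  have hevF : ∀ᶠ y in atTop, Fh y = ((ℙ : Measure Ω) {ω | h ω ≤ y}).toReal := by
    filter_upwards [eventually_ge_atTop (k₀ : ℝ)] with y hy
    have hpos : 0 < (ℙ : Measure Ω) {ω | h ω ≤ y} :=
      lt_of_lt_of_le (hk₀.bot_lt) (measure_mono (fun ω hω => le_trans hω hy))
    rw [hFh y] at hpos ⊢
    have hFpos : 0 < Fh y := by
      by_contra hF
      push_neg at hF
      rw [ENNReal.ofReal_eq_zero.mpr hF] at hpos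
      exact lt_irrefl _ hpos
    rw [ENNReal.toReal_ofReal hFpos.le]
  have hevT : ∀ᶠ y in atTop, t y = 1 - Fh y := by
    filter_upwards [hevF] with y hy
    have := htcompl y
    rw [← hy] at this; linarith
  -- eventually the tail ratio is > 1/2 and 1 - Fh y > 0
  have hratio : ∀ᶠ y in atTop,
      1/2 < (1 - Fh y) / (α * y ^ l * Real.exp (-β * y ^ n + H y)) :=
    htail.eventually_const_lt (by norm_num)
  have hevpos : ∀ᶠ y in atTop, 0 < 1 - Fh y := by
    filter_upwards [hratio, eventually_gt_atTop (0:ℝ)] with y hr hy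
    have hden : 0 < α * y ^ l * Real.exp (-β * y ^ n + H y) :=
      mul_pos (mul_pos hα (Real.rpow_pos_of_pos hy l)) (Real.exp_pos _)
    have := mul_pos (lt_trans (by norm_num) hr) hden
    rwa [div_mul_cancel₀ _ hden.ne'] at this
  -- positivity of t everywhere
  have htpos : ∀ y : ℝ, 0 < t y := by
    intro y
    obtain ⟨z, ⟨hz1, hz2⟩, hz3⟩ := ((hevT.and hevpos).and (eventually_ge_atTop y)).exists
    exact lt_of_lt_of_le (by rw [hz1]; exact hz2) (hanti y z hz3)
  -- the key asymptotic: log (t y) / y^n → -β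
  have hyn : Tendsto (fun y : ℝ => y ^ n) atTop atTop := tendsto_rpow_atTop hn
  have hA : Tendsto (fun y => Real.log (t y) / y ^ n) atTop (nhds (-β)) := by
    have hlogr : Tendsto
        (fun y => Real.log ((1 - Fh y) / (α * y ^ l * Real.exp (-β * y ^ n + H y))))
        atTop (nhds 0) := by
      have := (Real.continuousAt_log one_ne_zero).tendsto.comp htail
      simpa [Function.comp_def] using this
    have T1 := hlogr.div_atTop hyn
    have T2 : Tendsto (fun y : ℝ => Real.log α / y ^ n) atTop (nhds 0) :=
      tendsto_const_nhds.div_atTop hyn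
    have T3 : Tendsto (fun y : ℝ => Real.log y / y ^ n) atTop (nhds 0) :=
      (isLittleO_log_rpow_atTop hn).tendsto_div_nhds_zero
    have Tsum : Tendsto (fun y : ℝ =>
        Real.log ((1 - Fh y) / (α * y ^ l * Real.exp (-β * y ^ n + H y))) / y ^ n
          + Real.log α / y ^ n + l * (Real.log y / y ^ n) + (-β + H y / y ^ n))
        atTop (nhds (0 + 0 + l * 0 + (-β + 0))) :=
      ((T1.add T2).add (tendsto_const_nhds.mul T3)).add (tendsto_const_nhds.add hH)
    rw [show (0:ℝ) + 0 + l * 0 + (-β + 0) = -β by ring] at Tsum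
    refine Tsum.congr' ?_
    filter_upwards [hevT, hratio, hevpos, eventually_gt_atTop (0:ℝ)] with y hT hr hp hy
    have hden : 0 < α * y ^ l * Real.exp (-β * y ^ n + H y) :=
      mul_pos (mul_pos hα (Real.rpow_pos_of_pos hy l)) (Real.exp_pos _)
    have hrpos : 0 < (1 - Fh y) / (α * y ^ l * Real.exp (-β * y ^ n + H y)) :=
      div_pos hp hden
    have hynpos : 0 < y ^ n := Real.rpow_pos_of_pos hy n
    have hdenlog : Real.log (α * y ^ l * Real.exp (-β * y ^ n + H y))
        = Real.log α + l * Real.log y + (-β * y ^ n + H y) := by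
      rw [Real.log_mul (mul_pos hα (Real.rpow_pos_of_pos hy l)).ne' (Real.exp_pos _).ne',
        Real.log_mul hα.ne' (Real.rpow_pos_of_pos hy l).ne',
        Real.log_rpow hy, Real.log_exp]
    have hld : Real.log ((1 - Fh y) / (α * y ^ l * Real.exp (-β * y ^ n + H y)))
        = Real.log (1 - Fh y) - Real.log (α * y ^ l * Real.exp (-β * y ^ n + H y)) :=
      Real.log_div hp.ne' hden.ne'
    have hlogt : Real.log (t y) =
        Real.log ((1 - Fh y) / (α * y ^ l * Real.exp (-β * y ^ n + H y)))
          + Real.log α + l * Real.log y + (-β * y ^ n + H y) := by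
      rw [hT]; rw [hdenlog] at hld; linarith
    rw [hlogt]
    field_simp [hynpos.ne']
  -- choose M with positive probability that g ≤ M
  have hgset : ∃ k : ℕ, (ℙ : Measure Ω) {ω | g ω ≤ (k : ℝ)} ≠ 0 := by
    by_contra hcon
    push_neg at hcon
    have hun : (⋃ k : ℕ, {ω : Ω | g ω ≤ (k : ℝ)}) = Set.univ := by
      ext ω; simp only [Set.mem_iUnion, Set.mem_univ, iff_true, Set.mem_setOf_eq]
      exact exists_nat_ge (g ω)
    have := measure_iUnion_null (μ := (ℙ : Measure Ω))
      (s := fun k : ℕ => {ω : Ω | g ω ≤ (k : ℝ)}) (fun k => hcon k)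
    rw [hun, measure_univ] at this
    exact one_ne_zero this
  obtain ⟨kM, hkM⟩ := hgset
  set M : ℝ := (kM : ℝ) with hMdef
  set q : ℝ := ((ℙ : Measure Ω) {ω | g ω ≤ M}).toReal with hqdef
  have hq : 0 < q := ENNReal.toReal_pos hkM (measure_ne_top _ _)
  set c : ℝ := lam + mu * M with hcdef
  have hM0 : (0:ℝ) ≤ M := Nat.cast_nonneg kM
  have hc : 0 < c := by have := mul_nonneg hmu hM0; rw [hcdef]; linarith
  -- the quantile identity in terms of the tail of X
  have hquant' : ∀ N : ℕ, 1 ≤ N →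
      ((ℙ : Measure Ω) {ω | x N < h ω / (lam + mu * g ω)}).toReal = 1 / N := by
    intro N hN
    have hsetc : {ω : Ω | x N < h ω / (lam + mu * g ω)}
        = {ω : Ω | h ω / (lam + mu * g ω) ≤ x N}ᶜ := by
      ext ω; simp [not_le]
    have hms : MeasurableSet {ω : Ω | h ω / (lam + mu * g ω) ≤ x N} :=
      measurableSet_le (hmeas_h.div (measurable_const.add (measurable_const.mul hmeas_g)))
        measurable_const
    have := measure_add_measure_compl (μ := (ℙ : Measure Ω)) hms
    rw [measure_univ] at this
    have h2 : (((ℙ : Measure Ω) {ω | h ω / (lam + mu * g ω) ≤ x N})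
        + ((ℙ : Measure Ω) {ω | h ω / (lam + mu * g ω) ≤ x N}ᶜ)).toReal
        = (1 : ℝ≥0∞).toReal := by rw [this]
    rw [ENNReal.toReal_add (measure_ne_top _ _) (measure_ne_top _ _)] at h2
    have h3 := hquant N hN
    rw [hFX (x N)] at h3
    rw [hsetc]
    simp only [ENNReal.toReal_one] at h2
    linarith
  -- upper bound on the tail quantile: 1/N ≤ t (lam * x N)
  have hub : ∀ N : ℕ, 1 ≤ N → (1:ℝ) / N ≤ t (lam * x N) := by
    intro N hN
    rw [← hquant' N hN]
    refine ENNReal.toReal_mono (measure_ne_top _ _) (measure_mono_ae ?_)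
    filter_upwards [hpos_g] with ω hg hX
    have hd : 0 < lam + mu * g ω := by
      have := mul_nonneg hmu hg.le; linarith
    have h1 : x N * (lam + mu * g ω) < h ω := (lt_div_iff₀ hd).mp hX
    have h2 : lam * x N ≤ x N * (lam + mu * g ω) := by
      have := mul_nonneg hmu hg.le
      nlinarith [hxpos N]
    exact lt_of_le_of_lt h2 h1
  -- lower bound: t (c * x N) * q ≤ 1/N
  have hlb : ∀ N : ℕ, 1 ≤ N → t (c * x N) * q ≤ (1:ℝ) / N := by
    intro N hN
    rw [← hquant' N hN]
    have hprod : (ℙ : Measure Ω) ({ω | c * x N < h ω} ∩ {ω | g ω ≤ M})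
        = (ℙ : Measure Ω) {ω | c * x N < h ω} * (ℙ : Measure Ω) {ω | g ω ≤ M} := by
      have := hindep.measure_inter_preimage_eq_mul (Set.Ioi (c * x N)) (Set.Iic M)
        measurableSet_Ioi measurableSet_Iic
      simpa [Set.preimage, Set.mem_Ioi, Set.mem_Iic] using this
    have hsub : (ℙ : Measure Ω) ({ω | c * x N < h ω} ∩ {ω | g ω ≤ M})
        ≤ (ℙ : Measure Ω) {ω | x N < h ω / (lam + mu * g ω)} := by
      refine measure_mono_ae ?_
      filter_upwards [hpos_g] with ω hg hω
      obtain ⟨h1, h2⟩ := hω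
      have hd : 0 < lam + mu * g ω := by
        have := mul_nonneg hmu hg.le; linarith
      have hdc : lam + mu * g ω ≤ c := by
        have := mul_le_mul_of_nonneg_left h2 hmu
        rw [hcdef]; linarith
      have : x N * (lam + mu * g ω) ≤ x N * c :=
        mul_le_mul_of_nonneg_left hdc (hxpos N).le
      have hlt : x N * (lam + mu * g ω) < h ω := by
        calc x N * (lam + mu * g ω) ≤ x N * c := this
        _ = c * x N := mul_comm _ _
        _ < h ω := h1
      exact (lt_div_iff₀ hd).mpr hlt
    calc t (c * x N) * q
        = ((ℙ : Measure Ω) {ω | c * x N < h ω} * (ℙ : Measure Ω) {ω | g ω ≤ M}).toReal := by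
          rw [ENNReal.toReal_mul]
      _ = ((ℙ : Measure Ω) ({ω | c * x N < h ω} ∩ {ω | g ω ≤ M})).toReal := by rw [hprod]
      _ ≤ ((ℙ : Measure Ω) {ω | x N < h ω / (lam + mu * g ω)}).toReal :=
          ENNReal.toReal_mono (measure_ne_top _ _) hsub
  -- x N → ∞
  have hxtop : Tendsto x atTop atTop := by
    rw [tendsto_atTop]
    intro R
    have h1N : Tendsto (fun N : ℕ => (1:ℝ) / N) atTop (nhds 0) :=
      tendsto_one_div_atTop_nhds_zero_nat
    have hpos : 0 < t (c * R) * q := mul_pos (htpos _) hq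
    filter_upwards [h1N.eventually_lt_const hpos, eventually_ge_atTop 1] with N hsmall hN1
    by_contra hcon
    push_neg at hcon
    have hle : c * x N ≤ c * R := mul_le_mul_of_nonneg_left hcon.le hc.le
    have := mul_le_mul_of_nonneg_right (hanti _ _ hle) hq.le
    have := le_trans this (hlb N hN1)
    linarith
  -- extract two-sided bounds on log (t y) from hA
  have hAub : ∀ᶠ y in atTop, Real.log (t y) ≤ -(β/2) * y ^ n := by
    filter_upwards [hA.eventually_lt_const (show -β < -(β/2) by linarith),
      eventually_gt_atTop (0:ℝ)] with y h1 hy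
    have hynpos : 0 < y ^ n := Real.rpow_pos_of_pos hy n
    have := (div_lt_iff₀ hynpos).mp h1
    linarith
  have hAlb : ∀ᶠ y in atTop, -(2*β) * y ^ n ≤ Real.log (t y) := by
    filter_upwards [hA.eventually_const_lt (show -(2*β) < -β by linarith),
      eventually_gt_atTop (0:ℝ)] with y h1 hy
    have hynpos : 0 < y ^ n := Real.rpow_pos_of_pos hy n
    have := (lt_div_iff₀ hynpos).mp h1
    linarith
  obtain ⟨Y, hY⟩ := eventually_atTop.mp (hAub.and hAlb)
  -- the log-log function
  set L : ℕ → ℝ := fun N => Real.log (Real.log N) with hLdef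
  have hlogN : Tendsto (fun N : ℕ => Real.log N) atTop atTop :=
    Real.tendsto_log_atTop.comp tendsto_natCast_atTop_atTop
  have hLtop : Tendsto L atTop atTop := Real.tendsto_log_atTop.comp hlogN
  set Cu : ℝ := Real.log (2/β) / n - Real.log lam with hCu
  set Cl : ℝ := -(Real.log (4*β) / n) - Real.log c with hCl
  -- eventual two-sided bound on log (x N)
  have hbound : ∀ᶠ N : ℕ in atTop,
      1/n + Cl / L N ≤ Real.log (x N) / L N ∧ Real.log (x N) / L N ≤ 1/n + Cu / L N := by
    filter_upwards [eventually_ge_atTop 1,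
      hxtop.eventually_ge_atTop (max (Y / lam) (Y / c)),
      hlogN.eventually_ge_atTop 1,
      hlogN.eventually_ge_atTop (-2 * Real.log q),
      hLtop.eventually_gt_atTop 0] with N hN1 hxN hlN1 hlNq hLpos
    have hxNpos := hxpos N
    have hY1 : Y ≤ lam * x N := by
      have := le_trans (le_max_left (Y/lam) (Y/c)) hxN
      rw [div_le_iff₀ hlam] at this; linarith
    have hY2 : Y ≤ c * x N := by
      have := le_trans (le_max_right (Y/lam) (Y/c)) hxN
      rw [div_le_iff₀ hc] at this; linarith
    have hlampos : 0 < lam * x N := mul_pos hlam hxNpos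
    have hcpos : 0 < c * x N := mul_pos hc hxNpos
    have hNpos : (0:ℝ) < N := by exact_mod_cast hN1
    have h1N : (0:ℝ) < 1 / N := by positivity
    have hlogoneN : Real.log (1 / (N:ℝ)) = -Real.log N := by
      rw [one_div, Real.log_inv]
    constructor
    · -- lower bound
      have hB := hlb N hN1
      have htc := htpos (c * x N)
      have hlog1 : Real.log (t (c * x N) * q) ≤ Real.log (1 / (N:ℝ)) :=
        (Real.log_le_log_iff (mul_pos htc hq) h1N).mpr hB
      rw [Real.log_mul htc.ne' hq.ne', hlogoneN] at hlog1
      have hlog2 := (hY (c * x N) hY2).2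
      -- 2β (c x N)^n ≥ log N + log q ≥ (1/2) log N
      have hhalf : Real.log N / 2 ≤ 2*β * (c * x N) ^ n := by linarith
      have hdiv : Real.log N / (4*β) ≤ (c * x N) ^ n := by
        rw [div_le_iff₀ (by positivity : (0:ℝ) < 4*β)]
        linarith
      have hlNdivpos : 0 < Real.log N / (4*β) := by positivity
      have hlog3 : Real.log (Real.log N / (4*β)) ≤ Real.log ((c * x N) ^ n) :=
        (Real.log_le_log_iff hlNdivpos (Real.rpow_pos_of_pos hcpos n)).mpr hdiv
      have hlN0 : Real.log (N:ℝ) ≠ 0 := by linarith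
      rw [Real.log_rpow hcpos,
        Real.log_div (x := Real.log (N:ℝ)) (y := 4*β) hlN0 (by positivity),
        Real.log_mul hc.ne' hxNpos.ne'] at hlog3
      -- L N - log(4β) ≤ n (log c + log x N)
      have hfin : L N / n + Cl ≤ Real.log (x N) := by
        rw [hCl]
        have h5 : (L N - Real.log (4*β)) / n ≤ Real.log c + Real.log (x N) := by
          rw [div_le_iff₀ hn]
          calc L N - Real.log (4*β) ≤ n * (Real.log c + Real.log (x N)) := by linarith
          _ = (Real.log c + Real.log (x N)) * n := mul_comm _ _
        have h6 : (L N - Real.log (4*β)) / n = L N / n - Real.log (4*β) / n :=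
          sub_div _ _ _
        linarith
      have heq : (1:ℝ)/n + Cl / L N = (L N / n + Cl) / L N := by
        field_simp [hLpos.ne', hn.ne']
        try ring
      rw [heq]
      exact (div_le_div_iff_of_pos_right hLpos).mpr hfin
    · -- upper bound
      have hB := hub N hN1
      have hlog1 : Real.log (1 / (N:ℝ)) ≤ Real.log (t (lam * x N)) :=
        (Real.log_le_log_iff h1N (htpos _)).mpr hB
      rw [hlogoneN] at hlog1
      have hlog2 := (hY (lam * x N) hY1).1
      have hdiv : (lam * x N) ^ n ≤ 2/β * Real.log N := by
        rw [div_mul_eq_mul_div, le_div_iff₀ hβ]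
        linarith
      have h2bpos : (0:ℝ) < 2/β * Real.log N := by positivity
      have hlog3 : Real.log ((lam * x N) ^ n) ≤ Real.log (2/β * Real.log N) :=
        (Real.log_le_log_iff (Real.rpow_pos_of_pos hlampos n) h2bpos).mpr hdiv
      have hlN0 : Real.log (N:ℝ) ≠ 0 := by linarith
      rw [Real.log_rpow hlampos,
        Real.log_mul (x := 2/β) (y := Real.log (N:ℝ)) (by positivity) hlN0,
        Real.log_mul hlam.ne' hxNpos.ne'] at hlog3
      have hfin : Real.log (x N) ≤ L N / n + Cu := by
        rw [hCu]
        have h5 : Real.log lam + Real.log (x N) ≤ (Real.log (2/β) + L N) / n := by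
          rw [le_div_iff₀ hn]
          calc (Real.log lam + Real.log (x N)) * n
              = n * (Real.log lam + Real.log (x N)) := mul_comm _ _
          _ ≤ Real.log (2/β) + L N := by linarith
        have h6 : (Real.log (2/β) + L N) / n = Real.log (2/β) / n + L N / n :=
          add_div _ _ _
        linarith
      have heq : (1:ℝ)/n + Cu / L N = (L N / n + Cu) / L N := by
        field_simp [hLpos.ne', hn.ne']
        try ring
      rw [heq]
      exact (div_le_div_iff_of_pos_right hLpos).mpr hfin
  -- squeeze
  have hlow : Tendsto (fun N : ℕ => 1/n + Cl / L N) atTop (nhds (1/n)) := by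
    have h0 : Tendsto (fun N : ℕ => Cl / L N) atTop (nhds 0) :=
      tendsto_const_nhds.div_atTop hLtop
    simpa using h0.const_add (1/n)
  have hup : Tendsto (fun N : ℕ => 1/n + Cu / L N) atTop (nhds (1/n)) := by
    have h0 : Tendsto (fun N : ℕ => Cu / L N) atTop (nhds 0) :=
      tendsto_const_nhds.div_atTop hLtop
    simpa using h0.const_add (1/n)
  exact tendsto_of_tendsto_of_tendsto_of_le_of_le' hlow hup
    (hbound.mono fun N hb => hb.1) (hbound.mono fun N hb => hb.2)
end

section
/- In the setting of the water-filling solution, the KKT stationarity condition in W, namely log(1 + h·P*(h,g)) - (λ+μg)·P*(h,g) - η ≥ 0 with P*(h,g) = max(1/(λ+μg) - 1/h, 0), holds if and only if G(h/(λ+μg))·𝟙{h/(λ+μg) ≥ 1} ≥ η, where G(x) = log x + 1/x - 1; consequently, since G is strictly increasing on [1,∞), the optimal scheduling set {W* = 1} is a threshold set of the form {h/(λ+μg) > t} for some threshold t ≥ 1 (when η > 0). -/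
/-- With `P*(h,g) = max(1/(λ+μg) - 1/h, 0)` and `G(x) = log x + 1/x - 1`, the KKT
stationarity condition in `W`, i.e. `log(1 + h P*) - (λ+μg) P* - η ≥ 0`, holds iff
`G(h/(λ+μg)) 𝟙{h/(λ+μg) ≥ 1} ≥ η`; moreover, since `G` is strictly increasing on
`[1, ∞)`, for `η > 0` the scheduling set is a threshold set: there is `t ≥ 1` such that
the condition holds exactly when `h/(λ+μg) ≥ t`. -/
theorem stmt_16 (lam mu η : ℝ) (hlam : 0 < lam) (hmu : 0 ≤ mu) :
    let P : ℝ → ℝ → ℝ := fun h g => max (1 / (lam + mu * g) - 1 / h) 0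
    let G : ℝ → ℝ := fun x => Real.log x + 1 / x - 1
    (∀ h g : ℝ, 0 < h → 0 < g →
      (0 ≤ Real.log (1 + h * P h g) - (lam + mu * g) * P h g - η ↔
        η ≤ G (h / (lam + mu * g)) *
          (if 1 ≤ h / (lam + mu * g) then (1 : ℝ) else 0))) ∧
    (0 < η → ∃ t : ℝ, 1 ≤ t ∧ ∀ h g : ℝ, 0 < h → 0 < g →
      (η ≤ G (h / (lam + mu * g)) *
          (if 1 ≤ h / (lam + mu * g) then (1 : ℝ) else 0) ↔
        t ≤ h / (lam + mu * g))) := by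
  intro P G
  -- strict monotonicity of G on [1,∞)
  have mono : ∀ x y : ℝ, 1 ≤ x → x < y → G x < G y := by
    intro x y hx hxy
    have hx0 : (0:ℝ) < x := lt_of_lt_of_le one_pos hx
    have hy0 : (0:ℝ) < y := hx0.trans hxy
    have h1 : Real.log (x / y) < x / y - 1 :=
      Real.log_lt_sub_one_of_pos (by positivity) (by
        intro h
        have : x = y := by field_simp at h; linarith
        linarith)
    rw [Real.log_div hx0.ne' hy0.ne'] at h1
    have hxy' : 1 / x - 1 / y ≤ 1 - x / y := by
      rw [div_sub_div _ _ hx0.ne' hy0.ne',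
        show (1:ℝ) - x / y = (y - x) / y by field_simp,
        div_le_div_iff₀ (by positivity) hy0]
      nlinarith [mul_nonneg (mul_nonneg (sub_nonneg.2 hxy.le) hy0.le) (sub_nonneg.2 hx)]
    simp only [G]
    have : x / y - 1 ≤ 0 := by
      have : x / y < 1 := (div_lt_one hy0).mpr hxy
      linarith
    nlinarith [h1, hxy']
  have key : ∀ h g : ℝ, 0 < h → 0 < g →
      Real.log (1 + h * P h g) - (lam + mu * g) * P h g
        = G (h / (lam + mu * g)) * (if 1 ≤ h / (lam + mu * g) then (1:ℝ) else 0) := by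
    intro h g hh hg
    have ha : (0:ℝ) < lam + mu * g := by positivity
    by_cases hc : 1 ≤ h / (lam + mu * g)
    · have hah : lam + mu * g ≤ h := by
        rwa [le_div_iff₀ ha, one_mul] at hc
      have hP : P h g = 1 / (lam + mu * g) - 1 / h := by
        apply max_eq_left
        have := one_div_le_one_div_of_le ha hah
        linarith
      rw [hP, if_pos hc]
      have e1 : 1 + h * (1 / (lam + mu * g) - 1 / h) = h / (lam + mu * g) := by
        field_simp
        ring
      have e2 : (lam + mu * g) * (1 / (lam + mu * g) - 1 / h)
          = 1 - 1 / (h / (lam + mu * g)) := by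
        rw [one_div_div]; field_simp
      rw [e1, e2]
      simp only [G]; ring
    · push_neg at hc
      have hah : h < lam + mu * g := by
        rwa [div_lt_one ha] at hc
      have hP : P h g = 0 := by
        apply max_eq_right
        have := one_div_lt_one_div_of_lt hh hah
        linarith
      rw [hP, if_neg (not_le.mpr hc)]
      simp
  constructor
  · intro h g hh hg
    rw [key h g hh hg]
    constructor <;> intro h' <;> linarith
  · intro hη
    set M : ℝ := Real.exp (η + 1) with hM
    have hM1 : (1:ℝ) ≤ M := Real.one_le_exp (by linarith)
    have hM0 : (0:ℝ) < M := lt_of_lt_of_le one_pos hM1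
    have hGM : η < G M := by
      simp only [G, hM, Real.log_exp]
      have : 0 < 1 / Real.exp (η + 1) := by positivity
      linarith
    have hG1 : G 1 = 0 := by simp [G]
    have hcont : ContinuousOn G (Set.Icc 1 M) := by
      intro x hx
      have hx0 : x ≠ 0 := by
        have := hx.1; intro h'; rw [h'] at this; linarith
      exact (((Real.continuousAt_log hx0).add
        (continuousAt_const.div continuousAt_id hx0)).sub
        continuousAt_const).continuousWithinAt
    have hmem : η ∈ Set.Icc (G 1) (G M) := ⟨by rw [hG1]; exact hη.le, hGM.le⟩
    obtain ⟨t, htmem, htG⟩ := intermediate_value_Icc hM1 hcont hmem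
    refine ⟨t, htmem.1, ?_⟩
    intro h g hh hg
    have ha : (0:ℝ) < lam + mu * g := by positivity
    set x := h / (lam + mu * g) with hx
    constructor
    · intro hcond
      by_cases hc : 1 ≤ x
      · rw [if_pos hc, mul_one] at hcond
        by_contra hlt
        push_neg at hlt
        have := mono x t hc hlt
        rw [htG] at this
        linarith
      · rw [if_neg hc, mul_zero] at hcond
        linarith
    · intro ht
      have hx1 : 1 ≤ x := le_trans htmem.1 ht
      rw [if_pos hx1, mul_one]
      rcases eq_or_lt_of_le ht with heq | hlt
      · rw [← heq, htG]
      · have := mono t x htmem.1 hlt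
        rw [htG] at this
        linarith
end
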